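/- Let S be the Steiner loop on GF(3)² ∪ {e} (with x*y = -(x+y) for distinct x,y ∈ GF(3)², x*x = e, e the identity). If x, y, z ∈ S satisfy (x*y)*z = x*(y*z), then the subloop generated by {x, y, z} is associative, i.e., is a group; in fact it is contained in a subloop of the form {e, a, b, a*b} or {e, a} and hence is an elementary abelian 2-group. -/

import Mathlib

/-!
The Steiner loop is commutative, every element squares to `e`, and `x * (x * y) = y`; these
identities alone make every set `{e, a, b, a * b}` closed and associative. Conversely, for
pairwise distinct points `u, v, w` with `w ≠ u * v` the two bracketings are `u + v - w` and
`-u + v + w`, which agree only when `2 u = 2 w`, i.e. `u = w` in characteristic 3. So an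
associating triple contains `e`, a repeated point or a whole line, and lies in some
`{e, a, b, a * b}`.
-/

/-- The Steiner loop on `GF(3)² ∪ {e}`: `e = none` is the identity, `x*x = e`,
and `x*y = -(x+y)` for distinct `x, y ∈ GF(3)²`. -/
def ag23Mul : Option (ZMod 3 × ZMod 3) → Option (ZMod 3 × ZMod 3) → Option (ZMod 3 × ZMod 3)
  | none, b => b
  | a, none => a
  | some u, some v => if u = v then none else some (-(u + v))

/-- The subloop of `GF(3)² ∪ {e}` generated by three elements: the smallest
subset containing them that is closed under multiplication. -/
def ag23Gen (x y z : Option (ZMod 3 × ZMod 3)) : Set (Option (ZMod 3 × ZMod 3)) :=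
  ⋂₀ {T | x ∈ T ∧ y ∈ T ∧ z ∈ T ∧ ∀ a ∈ T, ∀ b ∈ T, ag23Mul a b ∈ T}

@[simp] lemma ag23Mul_none_left (a : Option (ZMod 3 × ZMod 3)) : ag23Mul none a = a := rfl

@[simp] lemma ag23Mul_none_right (a : Option (ZMod 3 × ZMod 3)) : ag23Mul a none = a := by
  cases a <;> rfl

lemma ag23Mul_some_of_ne {u v : ZMod 3 × ZMod 3} (huv : u ≠ v) :
    ag23Mul (some u) (some v) = some (-(u + v)) := if_neg huv

@[simp] lemma ag23Mul_self (a : Option (ZMod 3 × ZMod 3)) : ag23Mul a a = none := by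
  cases a <;> simp [ag23Mul]

lemma ag23Mul_comm (a b : Option (ZMod 3 × ZMod 3)) : ag23Mul a b = ag23Mul b a := by
  rcases a with _ | u
  · simp
  rcases b with _ | v
  · simp
  by_cases huv : u = v
  · rw [huv]
  · rw [ag23Mul_some_of_ne huv, ag23Mul_some_of_ne (Ne.symm huv), add_comm]

@[simp] lemma ag23Mul_mul_cancel_left (a b : Option (ZMod 3 × ZMod 3)) :
    ag23Mul a (ag23Mul a b) = b := by
  rcases a with _ | u
  · simp
  rcases b with _ | v
  · simp
  by_cases huv : u = v
  · simp [huv]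
  · have hu : u ≠ -(u + v) := fun h =>
      huv (by linear_combination ZModModule.char_nsmul_eq_zero 3 u - h)
    rw [ag23Mul_some_of_ne huv, ag23Mul_some_of_ne hu]
    congr 1
    abel

@[simp] lemma ag23Mul_mul_cancel_right (a b : Option (ZMod 3 × ZMod 3)) :
    ag23Mul (ag23Mul a b) b = a := by
  rw [ag23Mul_comm, ag23Mul_comm a, ag23Mul_mul_cancel_left]

@[simp] lemma ag23Mul_mul_cancel_left' (a b : Option (ZMod 3 × ZMod 3)) :
    ag23Mul (ag23Mul a b) a = b := by
  rw [ag23Mul_comm, ag23Mul_mul_cancel_left]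

@[simp] lemma ag23Mul_mul_cancel_right' (a b : Option (ZMod 3 × ZMod 3)) :
    ag23Mul b (ag23Mul a b) = a := by
  rw [ag23Mul_comm, ag23Mul_mul_cancel_right]

def ag23Klein (a b : Option (ZMod 3 × ZMod 3)) : Set (Option (ZMod 3 × ZMod 3)) :=
  {none, a, b, ag23Mul a b}

lemma ag23Mul_mem_klein {a b p q : Option (ZMod 3 × ZMod 3)} (hp : p ∈ ag23Klein a b)
    (hq : q ∈ ag23Klein a b) : ag23Mul p q ∈ ag23Klein a b := by
  have hba := ag23Mul_comm b a
  rcases hp with hp | hp | hp | hp <;> subst p <;> rcases hq with hq | hq | hq | hq <;> subst q <;>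
    simp [ag23Klein, hba]

lemma ag23Mul_assoc_of_mem_klein {a b p q r : Option (ZMod 3 × ZMod 3)} (hp : p ∈ ag23Klein a b)
    (hq : q ∈ ag23Klein a b) (hr : r ∈ ag23Klein a b) :
    ag23Mul (ag23Mul p q) r = ag23Mul p (ag23Mul q r) := by
  have hba := ag23Mul_comm b a
  rcases hp with hp | hp | hp | hp <;> subst p <;> rcases hq with hq | hq | hq | hq <;> subst q <;>
    rcases hr with hr | hr | hr | hr <;> subst r <;> simp [hba]

lemma eq_of_ag23Mul_assoc {u v w : ZMod 3 × ZMod 3} (huv : u ≠ v) (hvw : v ≠ w)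
    (hw : w ≠ -(u + v))
    (h : ag23Mul (ag23Mul (some u) (some v)) (some w) =
      ag23Mul (some u) (ag23Mul (some v) (some w))) : u = w := by
  have hu : u ≠ -(v + w) := fun h' => hw (by linear_combination h')
  rw [ag23Mul_some_of_ne huv, ag23Mul_some_of_ne hvw, ag23Mul_some_of_ne (Ne.symm hw),
    ag23Mul_some_of_ne hu, Option.some_inj] at h
  linear_combination -h + ZModModule.char_nsmul_eq_zero 3 u - ZModModule.char_nsmul_eq_zero 3 w

lemma exists_mem_klein_of_assoc {x y z : Option (ZMod 3 × ZMod 3)}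
    (h : ag23Mul (ag23Mul x y) z = ag23Mul x (ag23Mul y z)) :
    ∃ a b, x ∈ ag23Klein a b ∧ y ∈ ag23Klein a b ∧ z ∈ ag23Klein a b := by
  rcases x with _ | u
  · exact ⟨y, z, by simp [ag23Klein]⟩
  rcases y with _ | v
  · exact ⟨some u, z, by simp [ag23Klein]⟩
  rcases z with _ | w
  · exact ⟨some u, some v, by simp [ag23Klein]⟩
  by_cases huv : u = v
  · exact ⟨some u, some w, by simp [ag23Klein, huv]⟩
  by_cases hvw : v = w
  · exact ⟨some u, some v, by simp [ag23Klein, hvw]⟩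
  by_cases hw : w = -(u + v)
  · exact ⟨some u, some v, by simp [ag23Klein, ag23Mul_some_of_ne huv, hw]⟩
  obtain rfl := eq_of_ag23Mul_assoc huv hvw hw h
  exact ⟨some u, some v, by simp [ag23Klein]⟩

/-- Moufang's theorem for the Steiner loop of `AG(2,3)`: if `(x*y)*z = x*(y*z)`
then the subloop generated by `x, y, z` is associative (a group); in fact it is
contained in a set of the form `{e, a, b, a*b}` and hence is elementary
abelian of exponent 2. -/
theorem stmt_17 (x y z : Option (ZMod 3 × ZMod 3))
    (h : ag23Mul (ag23Mul x y) z = ag23Mul x (ag23Mul y z)) :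
    (∀ a ∈ ag23Gen x y z, ∀ b ∈ ag23Gen x y z, ∀ c ∈ ag23Gen x y z,
        ag23Mul (ag23Mul a b) c = ag23Mul a (ag23Mul b c)) ∧
    (∃ a b : Option (ZMod 3 × ZMod 3),
        ag23Gen x y z ⊆ {none, a, b, ag23Mul a b}) ∧
    (∀ a ∈ ag23Gen x y z, ag23Mul a a = none) := by
  obtain ⟨a, b, hx, hy, hz⟩ := exists_mem_klein_of_assoc h
  have hsub : ag23Gen x y z ⊆ ag23Klein a b :=
    Set.sInter_subset_of_mem ⟨hx, hy, hz, fun p hp q hq => ag23Mul_mem_klein hp hq⟩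
  exact ⟨fun p hp q hq r hr => ag23Mul_assoc_of_mem_klein (hsub hp) (hsub hq) (hsub hr),
    ⟨a, b, hsub⟩, fun p _ => ag23Mul_self p⟩
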